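/- (Concise regular restrictions with full dimensions identify the algebra; final claim of the Cactus Apolarity Theorem.) Let k be a field, d ≥ 2 and r ≥ 1. Let A be a finite-dimensional commutative k-algebra with dim_k A ≤ r, let ε : A → k be a k-linear functional, let U_1,…,U_d be k-vector spaces each of dimension r, and let f_i : U_i → A be regular k-linear maps. Define the multilinear map T : U_1 × ⋯ × U_d → k by T(u_1,…,u_d) = ε(f_1(u_1)⋯f_d(u_d)). If T is concise in every slot (for each i, the only u ∈ U_i such that T vanishes on every argument tuple whose i-th entry is u is u = 0), then dim_k A = r, every f_i is a k-linear bijection, and ε is a dual generator of A; in particular A is Gorenstein. -/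

import Mathlib

/-!
Conciseness in slot `i` already forces `f i` to be injective, since a vector killed by `f i`
makes every product vanish; as `dim U i = r ≥ dim A`, each `f i` is then bijective. If
`ε (a * A) = 0`, write `a = f i u`; every value of `T` with `u` in slot `i` has the form
`ε (a * x)`, so `u = 0` by conciseness and `a = 0`. Thus `a ↦ ε (a * ·)` is injective, hence
bijective onto the dual of the finite-dimensional space `A`.
-/

open scoped BigOperators

namespace Stmt14

/-- `ε : A → k` is a dual generator: `a ↦ (x ↦ ε (a * x))` is a bijection `A → Dual_k A`.
An algebra admitting a dual generator is Gorenstein. -/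
def IsDualGenerator (k : Type*) [Field k] (A : Type*) [CommRing A] [Algebra k A]
    (ε : A →ₗ[k] k) : Prop :=
  Function.Bijective fun a : A => ε ∘ₗ LinearMap.mulLeft k a

/-- A `k`-linear map `f : V → A` is regular if the ideal of `A` generated by its image is
all of `A`. -/
def Regular (k : Type*) [Field k] (A : Type*) [CommRing A] [Algebra k A]
    {V : Type*} [AddCommGroup V] [Module k V] (f : V →ₗ[k] A) : Prop :=
  Ideal.span (Set.range f) = ⊤

section Concise

variable {k A ι : Type*} [CommRing k] [CommRing A] [Algebra k A] [Fintype ι]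
  {U : ι → Type*} [∀ i, AddCommGroup (U i)] [∀ i, Module k (U i)]

def ConciseAt (ε : A →ₗ[k] k) (f : ∀ j, U j →ₗ[k] A) (i : ι) : Prop :=
  ∀ u : U i, (∀ x : ∀ j, U j, x i = u → ε (∏ j, f j (x j)) = 0) → u = 0

variable {ε : A →ₗ[k] k} {f : ∀ j, U j →ₗ[k] A} {i : ι}

theorem ConciseAt.injective (hc : ConciseAt ε f i) : Function.Injective (f i) := by
  rw [← LinearMap.ker_eq_bot, LinearMap.ker_eq_bot']
  refine fun u hu => hc u fun x hx => ?_
  rw [Finset.prod_eq_zero (Finset.mem_univ i) (by rw [hx, hu]), map_zero]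

theorem ConciseAt.eq_zero_of_forall_map_mul_eq_zero (hc : ConciseAt ε f i)
    (hsurj : Function.Surjective (f i)) {a : A} (ha : ∀ x, ε (a * x) = 0) : a = 0 := by
  classical
  obtain ⟨u, rfl⟩ := hsurj a
  suffices u = 0 by rw [this, map_zero]
  refine hc u fun x hx => ?_
  rw [← Finset.mul_prod_erase _ _ (Finset.mem_univ i), hx]
  exact ha _

end Concise

theorem isDualGenerator_of_nondegenerate {k A : Type*} [Field k] [CommRing A] [Algebra k A]
    [FiniteDimensional k A] {ε : A →ₗ[k] k} (h : ∀ a, (∀ x, ε (a * x) = 0) → a = 0) :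
    IsDualGenerator k A ε := by
  let Φ : A →ₗ[k] Module.Dual k A := LinearMap.llcomp k A A k ε ∘ₗ LinearMap.mul k A
  have hΦ : Function.Injective Φ := by
    rw [← LinearMap.ker_eq_bot, LinearMap.ker_eq_bot']
    exact fun a ha => h a fun x => LinearMap.congr_fun ha x
  exact ⟨hΦ, (LinearMap.injective_iff_surjective_of_finrank_eq_finrank
    Subspace.dual_finrank_eq.symm).mp hΦ⟩

theorem concise_regular_restriction_identifies_general
    (k : Type*) [Field k] (d r : ℕ) (hd : 2 ≤ d)
    (A : Type*) [CommRing A] [Algebra k A] [FiniteDimensional k A]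
    (hA : Module.finrank k A ≤ r)
    (ε : A →ₗ[k] k)
    (U : Fin d → Type*) [∀ i, AddCommGroup (U i)] [∀ i, Module k (U i)]
    (hU : ∀ i, Module.finrank k (U i) = r)
    (f : ∀ i, U i →ₗ[k] A)
    (hconc : ∀ (i : Fin d) (u : U i),
      (∀ x : ∀ j : Fin d, U j, x i = u → ε (∏ j, f j (x j)) = 0) → u = 0) :
    Module.finrank k A = r ∧ (∀ i, Function.Bijective (f i)) ∧
      IsDualGenerator k A ε := by
  have hinj i : Function.Injective (f i) := ConciseAt.injective (hconc i)
  have _ i : FiniteDimensional k (U i) := .of_injective _ (hinj i)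
  let i₀ : Fin d := ⟨0, by omega⟩
  have hAr : Module.finrank k A = r :=
    le_antisymm hA (hU i₀ ▸ LinearMap.finrank_le_finrank_of_injective (hinj i₀))
  have hbij i : Function.Bijective (f i) := ⟨hinj i,
    (LinearMap.injective_iff_surjective_of_finrank_eq_finrank (by rw [hU i, hAr])).mp (hinj i)⟩
  exact ⟨hAr, hbij, isDualGenerator_of_nondegenerate fun _ ha =>
    ConciseAt.eq_zero_of_forall_map_mul_eq_zero (hconc i₀) (hbij i₀).2 ha⟩

/-- **Concise regular restrictions with full dimensions identify the algebra.**
Let `d ≥ 2`, `r ≥ 1`, `A` a finite-dimensional commutative `k`-algebra with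
`dim_k A ≤ r`, `ε : A → k` a functional, `U_i` vector spaces of dimension `r` and
`f_i : U_i → A` regular linear maps. If the multilinear map
`T (u₁,…,u_d) = ε (f₁ u₁ ⋯ f_d u_d)` is concise in every slot, then `dim_k A = r`, every
`f_i` is a linear bijection, and `ε` is a dual generator of `A`; in particular `A` is
Gorenstein. -/
theorem concise_regular_restriction_identifies
    (k : Type*) [Field k] (d r : ℕ) (hd : 2 ≤ d) (hr : 1 ≤ r)
    (A : Type*) [CommRing A] [Algebra k A] [FiniteDimensional k A]
    (hA : Module.finrank k A ≤ r)
    (ε : A →ₗ[k] k)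
    (U : Fin d → Type*) [∀ i, AddCommGroup (U i)] [∀ i, Module k (U i)]
    [∀ i, FiniteDimensional k (U i)] (hU : ∀ i, Module.finrank k (U i) = r)
    (f : ∀ i, U i →ₗ[k] A) (hreg : ∀ i, Regular k A (f i))
    (hconc : ∀ (i : Fin d) (u : U i),
      (∀ x : ∀ j : Fin d, U j, x i = u → ε (∏ j, f j (x j)) = 0) → u = 0) :
    Module.finrank k A = r ∧ (∀ i, Function.Bijective (f i)) ∧
      IsDualGenerator k A ε :=
  concise_regular_restriction_identifies_general k d r hd A hA ε U hU f hconc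

end Stmt14
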